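/- arXiv:1905.01428 — 2 statements merged into one kernel-verified Lean document; each statement's English description precedes it below -/
import Mathlib

section
/- Fix y ∈ [0,1] and a ≥ 1. Then max(1, (1−y)² + a·y) / (1 − y + a·y) ≥ 4/5. -/
/-! The completed square
`(1 - y)² + a y - (4/5) D = (y - 1/2)² + ((4/5) D - 1) / 4`, with `D = 1 - y + a y`,
shows that the second argument of the `max` beats `(4/5) D` whenever the first one does not. -/

theorem sq_add_mul_sub_four_fifths_mul (y a : ℝ) :
    (1 - y) ^ 2 + a * y - 4 / 5 * (1 - y + a * y) =
      (y - 1 / 2) ^ 2 + (4 / 5 * (1 - y + a * y) - 1) / 4 := by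
  ring

theorem four_fifths_mul_le_max (y a : ℝ) :
    4 / 5 * (1 - y + a * y) ≤ max 1 ((1 - y) ^ 2 + a * y) := by
  rcases le_or_gt (4 / 5 * (1 - y + a * y)) 1 with hle | hgt
  · exact hle.trans (le_max_left _ _)
  · refine le_trans ?_ (le_max_right _ _)
    have hsq := sq_add_mul_sub_four_fifths_mul y a
    linarith [sq_nonneg (y - 1 / 2)]

theorem two_box_ratio_ge_four_fifths_general
    (y a : ℝ) (hy0 : 0 ≤ y) (ha : 1 ≤ a) :
    max 1 ((1 - y) ^ 2 + a * y) / (1 - y + a * y) ≥ 4 / 5 := by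
  have hD : 0 < 1 - y + a * y := by nlinarith
  rw [ge_iff_le, le_div_iff₀ hD]
  exact four_fifths_mul_le_max y a

/-- The key bivariate inequality for the two-box 4/5 approximation:
for `y ∈ [0,1]` and `a ≥ 1`, `max(1, (1−y)² + a·y) / (1 − y + a·y) ≥ 4/5`. -/
theorem two_box_ratio_ge_four_fifths
    (y a : ℝ) (hy0 : 0 ≤ y) (hy1 : y ≤ 1) (ha : 1 ≤ a) :
    max 1 ((1 - y) ^ 2 + a * y) / (1 - y + a * y) ≥ 4 / 5 :=
  two_box_ratio_ge_four_fifths_general y a hy0 ha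
end

section
/- For fixed y ∈ [0,1], the function a ↦ max(1, (1−y)² + a·y)/(1 − y + a·y) on [1, ∞) attains its minimum at a = 2 − y, where its value equals 1/(1 + y(1−y)). -/
/-!
Put `c = y(1 − y) ≥ 0` and `d = 1 − y + a·y`. Then `(1 − y)² + a·y = d − c`, so the ratio is
`max(1, d − c)/d`: it equals `1/d` while `d ≤ 1 + c` and `1 − c/d` once `d ≥ 1 + c`. Both branches
are bounded below by their common value `1/(1 + c)` at `d = 1 + c`, that is, at `a = 2 − y`.
-/

lemma one_div_one_add_le_max_sub_div {c d : ℝ} (hc : 0 ≤ c) (hd : 0 < d) :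
    1 / (1 + c) ≤ max 1 (d - c) / d := by
  rcases le_total d (1 + c) with hle | hge
  · calc 1 / (1 + c) ≤ 1 / d := one_div_le_one_div_of_le hd hle
      _ ≤ max 1 (d - c) / d := div_le_div_of_nonneg_right (le_max_left _ _) hd.le
  · have hc' : c / d ≤ c / (1 + c) := div_le_div_of_nonneg_left hc (by linarith) hge
    calc 1 / (1 + c) = 1 - c / (1 + c) := by field_simp; ring
      _ ≤ 1 - c / d := by linarith
      _ = (d - c) / d := by field_simp
      _ ≤ max 1 (d - c) / d := div_le_div_of_nonneg_right (le_max_right _ _) hd.le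

/-- For fixed `y ∈ [0,1]`, the ratio `a ↦ max(1, (1−y)² + a·y)/(1 − y + a·y)` on
`[1, ∞)` attains its minimum at `a = 2 − y`, where its value is `1/(1 + y(1−y))`. -/
theorem two_box_ratio_min_at
    (y : ℝ) (hy0 : 0 ≤ y) (hy1 : y ≤ 1) :
    (∀ a : ℝ, 1 ≤ a →
      max 1 ((1 - y) ^ 2 + a * y) / (1 - y + a * y) ≥
        max 1 ((1 - y) ^ 2 + (2 - y) * y) / (1 - y + (2 - y) * y)) ∧
    max 1 ((1 - y) ^ 2 + (2 - y) * y) / (1 - y + (2 - y) * y) =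
      1 / (1 + y * (1 - y)) := by
  have hval : max 1 ((1 - y) ^ 2 + (2 - y) * y) / (1 - y + (2 - y) * y)
      = 1 / (1 + y * (1 - y)) := by
    rw [show (1 - y) ^ 2 + (2 - y) * y = 1 by ring, max_self]
    ring
  refine ⟨fun a ha => ?_, hval⟩
  have hnum : (1 - y) ^ 2 + a * y = (1 - y + a * y) - y * (1 - y) := by ring
  have hden : 0 < 1 - y + a * y := by nlinarith
  rw [hval, hnum]
  exact one_div_one_add_le_max_sub_div (mul_nonneg hy0 (sub_nonneg.mpr hy1)) hden
end
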